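/- For every integer d ≥ 4 there exists a Steiner triple system on a set of n = 2^{d+1} − 1 points which has a minimal spreading set of size d = log₂(n+1) − 1. -/

import Mathlib

/-- A Steiner triple system on `V`: a family `T` of 3-element `Finset`s such that
every pair of distinct points lies in exactly one member of `T`. -/
def IsSTS {V : Type*} (T : Set (Finset V)) : Prop :=
  (∀ t ∈ T, t.card = 3) ∧
    ∀ x y : V, x ≠ y → ∃! t : Finset V, t ∈ T ∧ x ∈ t ∧ y ∈ t

/-- `W` is closed w.r.t. the triple system `T`: whenever a triple of `T` contains two
points of `W`, all (in particular the third) of its points lie in `W`. -/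
def StsClosed {V : Type*} (T : Set (Finset V)) (W : Set V) : Prop :=
  ∀ t ∈ T, ∀ x ∈ t, ∀ y ∈ t, x ≠ y → x ∈ W → y ∈ W → ∀ z ∈ t, z ∈ W

/-- The closure of `S` w.r.t. `T`: the smallest closed set containing `S`. -/
def stsCl {V : Type*} (T : Set (Finset V)) (S : Set V) : Set V :=
  ⋂₀ {W : Set V | S ⊆ W ∧ StsClosed T W}

/-- `S` is a spreading set: its closure is the whole point set. -/
def IsSpreading {V : Type*} (T : Set (Finset V)) (S : Set V) : Prop :=
  stsCl T S = Set.univ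

/-- `S` is a minimal spreading set: it is spreading but no proper subset is. -/
def IsMinSpreading {V : Type*} (T : Set (Finset V)) (S : Set V) : Prop :=
  IsSpreading T S ∧ ∀ S' : Set V, S' ⊂ S → ¬ IsSpreading T S'

/-!
Start from the projective triple system on the nonzero vectors of `ι → ZMod 2`, whose lines are
the triples `{x, y, x + y}`, and twist it: every line inside the hyperplane `x k = 0` that avoids
`e c` is replaced by `{x, y, x + y + e c}`. The twisted sum `∘` is still commutative and satisfies
`x ∘ (x ∘ y) = y`, so the new lines again form a Steiner triple system.

Twisting changes only the `c`-coordinate, so each hyperplane `x j = 0` with `j ≠ c` stays closed,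
and no proper subset of `{e i | i ≠ c}` is spreading. On the other hand, the closure of
`{e i | i ≠ c}` together with `0` is closed under genuine addition, because `e k` lies off the
twisted hyperplane and `x + y` can be reached through untwisted lines. It contains
`e a ∘ e b = e a + e b + e c`, hence `e c`, hence every vector. For `ι = Fin (d + 1)` this gives
`2 ^ (d + 1) - 1` points and a minimal spreading set of size `d`.
-/

open Function

section Closure

variable {V : Type*} {T : Set (Finset V)} {S : Set V}

lemma subset_stsCl : S ⊆ stsCl T S := fun _ hx _ hW => hW.1 hx

lemma stsClosed_stsCl : StsClosed T (stsCl T S) :=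
  fun t ht x hx y hy hxy hxW hyW z hz W hW =>
    hW.2 t ht x hx y hy hxy (hxW W hW) (hyW W hW) z hz

lemma isSpreading_iff : IsSpreading T S ↔ ∀ W, S ⊆ W → StsClosed T W → W = Set.univ :=
  ⟨fun h _ hSW hW => Set.eq_univ_of_univ_subset (h ▸ Set.sInter_subset_of_mem ⟨hSW, hW⟩),
    fun h => h _ subset_stsCl stsClosed_stsCl⟩

end Closure

section Relabel

variable {α β : Type*} (e : α ≃ β) {T : Set (Finset α)}

lemma IsSTS.image_equiv (hT : IsSTS T) : IsSTS (e.finsetCongr '' T) := by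
  refine ⟨?_, fun x y hxy => ?_⟩
  · rintro _ ⟨t, ht, rfl⟩
    simpa using hT.1 t ht
  · obtain ⟨t, ⟨ht, hxt, hyt⟩, huniq⟩ := hT.2 (e.symm x) (e.symm y) (by simpa using hxy)
    refine ⟨e.finsetCongr t, ⟨⟨t, ht, rfl⟩, by simpa using hxt, by simpa using hyt⟩, ?_⟩
    rintro _ ⟨⟨s, hs, rfl⟩, hxs, hys⟩
    rw [huniq s ⟨hs, by simpa using hxs, by simpa using hys⟩]

lemma stsClosed_image_equiv_iff {W : Set β} :
    StsClosed (e.finsetCongr '' T) W ↔ StsClosed T (e ⁻¹' W) := by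
  simp only [StsClosed, Set.forall_mem_image, Equiv.finsetCongr_apply, Finset.forall_mem_map,
    Equiv.coe_toEmbedding, Set.mem_preimage, e.injective.ne_iff]

lemma isSpreading_image_equiv_iff {S : Set β} :
    IsSpreading (e.finsetCongr '' T) S ↔ IsSpreading T (e ⁻¹' S) := by
  simp only [isSpreading_iff, stsClosed_image_equiv_iff]
  refine ⟨fun h W hSW hW => ?_, fun h W hSW hW => ?_⟩
  · simpa using h (e.symm ⁻¹' W) (fun x hx => hSW (by simpa using hx)) (by simpa using hW)
  · simpa using h _ (Set.preimage_mono hSW) hW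

lemma IsMinSpreading.image_equiv {S : Set α} (h : IsMinSpreading T S) :
    IsMinSpreading (e.finsetCongr '' T) (e '' S) := by
  refine ⟨(isSpreading_image_equiv_iff e).2 (by simpa using h.1), fun S' hS' hsp => ?_⟩
  refine h.2 (e ⁻¹' S') ?_ ((isSpreading_image_equiv_iff e).1 hsp)
  simpa [Equiv.image_eq_preimage_symm] using e.symm.injective.image_strictMono hS'

end Relabel

structure IsSteinerQuasigroup {V : Type*} (f : V → V → V) : Prop where
  idem : ∀ x, f x x = x
  comm : ∀ x y, f x y = f y x
  left_inv : ∀ x y, f x (f x y) = y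

def steinerTriples {V : Type*} [DecidableEq V] (f : V → V → V) : Set (Finset V) :=
  {t | ∃ x y, x ≠ y ∧ t = {x, y, f x y}}

namespace IsSteinerQuasigroup

variable {V : Type*} {f : V → V → V} {x y : V}

lemma ne_left (hf : IsSteinerQuasigroup f) (hxy : x ≠ y) : f x y ≠ x := fun h =>
  hxy (by rw [← hf.left_inv x y, h, hf.idem])

lemma ne_right (hf : IsSteinerQuasigroup f) (hxy : x ≠ y) : f x y ≠ y :=
  hf.comm x y ▸ hf.ne_left hxy.symm

variable [DecidableEq V]

lemma card_triple (hf : IsSteinerQuasigroup f) (hxy : x ≠ y) :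
    ({x, y, f x y} : Finset V).card = 3 :=
  Finset.card_eq_three.2 ⟨x, y, f x y, hxy, (hf.ne_left hxy).symm, (hf.ne_right hxy).symm, rfl⟩

lemma eq_of_mem_steinerTriples (hf : IsSteinerQuasigroup f) {t : Finset V}
    (ht : t ∈ steinerTriples f) (hx : x ∈ t) (hy : y ∈ t) (hxy : x ≠ y) :
    t = {x, y, f x y} := by
  obtain ⟨a, b, hab, rfl⟩ := ht
  have hba : f b (f a b) = a := by rw [hf.comm a b, hf.left_inv]
  have hab' : f (f a b) a = b := by rw [hf.comm, hf.left_inv]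
  have hba' : f (f a b) b = a := by rw [hf.comm, hba]
  have hfxy : f x y ∈ ({a, b, f a b} : Finset V) := by
    simp only [Finset.mem_insert, Finset.mem_singleton] at hx hy
    rcases hx with hx | hx | hx <;> rcases hy with hy | hy | hy <;>
      simp [hx, hy, hf.idem, hf.left_inv, hba, hab', hba', hf.comm b a]
  refine (Finset.eq_of_subset_of_card_le ?_ (by rw [hf.card_triple hab, hf.card_triple hxy])).symm
  simp [Finset.insert_subset_iff, hx, hy, hfxy]

theorem isSTS (hf : IsSteinerQuasigroup f) : IsSTS (steinerTriples f) := by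
  refine ⟨?_, fun x y hxy => ⟨{x, y, f x y}, ⟨⟨x, y, hxy, rfl⟩, by simp, by simp⟩,
    fun t ⟨ht, hx, hy⟩ => hf.eq_of_mem_steinerTriples ht hx hy hxy⟩⟩
  rintro t ⟨x, y, hxy, rfl⟩
  exact hf.card_triple hxy

theorem stsClosed_iff (hf : IsSteinerQuasigroup f) {W : Set V} :
    StsClosed (steinerTriples f) W ↔ ∀ x ∈ W, ∀ y ∈ W, f x y ∈ W := by
  refine ⟨fun hW x hx y hy => ?_, fun hW t ht x hxt y hyt hxy hx hy z hz => ?_⟩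
  · obtain rfl | hxy := eq_or_ne x y
    · rwa [hf.idem]
    · exact hW _ ⟨x, y, hxy, rfl⟩ x (by simp) y (by simp) hxy hx hy _ (by simp)
  · rw [hf.eq_of_mem_steinerTriples ht hxt hyt hxy] at hz
    simp only [Finset.mem_insert, Finset.mem_singleton] at hz
    rcases hz with rfl | rfl | rfl
    exacts [hx, hy, hW x hx y hy]

end IsSteinerQuasigroup

section TwistedAdd

variable {V : Type*} [AddCommGroup V] (F : AddSubgroup V) (c : V)

def twistSet : Set V := (F : Set V) \ {0, c}

open Classical in
/-- The addition of `V` with every line `{x, y, x + y}` inside `twistSet F c` replaced by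
`{x, y, x + y + c}`. -/
noncomputable def twistedAdd (x y : V) : V :=
  if x ∈ twistSet F c ∧ y ∈ twistSet F c ∧ x + y ∈ twistSet F c then x + y + c else x + y

variable {F c} {x y : V}

lemma mem_twistSet : x ∈ twistSet F c ↔ x ∈ F ∧ x ≠ 0 ∧ x ≠ c := by
  simp [twistSet, not_or]

lemma twistedAdd_of_mem (h : x ∈ twistSet F c ∧ y ∈ twistSet F c ∧ x + y ∈ twistSet F c) :
    twistedAdd F c x y = x + y + c :=
  if_pos h

lemma twistedAdd_of_notMem
    (h : ¬(x ∈ twistSet F c ∧ y ∈ twistSet F c ∧ x + y ∈ twistSet F c)) :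
    twistedAdd F c x y = x + y :=
  if_neg h

lemma twistedAdd_of_left_notMem (hx : x ∉ F) : twistedAdd F c x y = x + y :=
  twistedAdd_of_notMem fun h => hx h.1.1

lemma twistedAdd_comm (x y : V) : twistedAdd F c x y = twistedAdd F c y x := by
  by_cases h : x ∈ twistSet F c ∧ y ∈ twistSet F c ∧ x + y ∈ twistSet F c
  · rw [twistedAdd_of_mem h, twistedAdd_of_mem ⟨h.2.1, h.1, add_comm x y ▸ h.2.2⟩,
      add_comm x y]
  · rw [twistedAdd_of_notMem h, add_comm,
      twistedAdd_of_notMem fun h' => h ⟨h'.2.1, h'.1, add_comm y x ▸ h'.2.2⟩]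

lemma zero_twistedAdd (y : V) : twistedAdd F c 0 y = y := by
  rw [twistedAdd_of_notMem fun h => (mem_twistSet.1 h.1).2.1 rfl, zero_add]

lemma map_twistedAdd {M : Type*} [AddCommGroup M] (φ : V →+ M) (hφ : φ c = 0) (x y : V) :
    φ (twistedAdd F c x y) = φ x + φ y := by
  unfold twistedAdd
  split_ifs <;> simp [hφ]

variable [Module (ZMod 2) V]

lemma ZModModule.add_eq_zero_iff_eq : x + y = 0 ↔ x = y := by
  rw [add_eq_zero_iff_eq_neg, ZModModule.neg_eq_self]

lemma ZModModule.add_add_cancel_left : x + (x + y) = y := by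
  rw [← add_assoc, ZModModule.add_self, zero_add]

lemma add_mem_twistSet_iff (hc : c ∈ F) : x + c ∈ twistSet F c ↔ x ∈ twistSet F c := by
  simp only [mem_twistSet, F.add_mem_cancel_right hc, ne_eq, ZModModule.add_eq_zero_iff_eq,
    add_eq_right]
  tauto

lemma twistedAdd_eq_zero_iff : twistedAdd F c x y = 0 ↔ x = y := by
  by_cases h : x ∈ twistSet F c ∧ y ∈ twistSet F c ∧ x + y ∈ twistSet F c
  · rw [twistedAdd_of_mem h, ZModModule.add_eq_zero_iff_eq]
    exact iff_of_false (mem_twistSet.1 h.2.2).2.2 fun hxy => (mem_twistSet.1 h.2.2).2.1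
      (ZModModule.add_eq_zero_iff_eq.2 hxy)
  · rw [twistedAdd_of_notMem h, ZModModule.add_eq_zero_iff_eq]

lemma twistedAdd_twistedAdd (hc : c ∈ F) (x y : V) :
    twistedAdd F c x (twistedAdd F c x y) = y := by
  by_cases h : x ∈ twistSet F c ∧ y ∈ twistSet F c ∧ x + y ∈ twistSet F c
  · have hsum : x + (x + y + c) = y + c := by rw [← add_assoc, ZModModule.add_add_cancel_left]
    rw [twistedAdd_of_mem h, twistedAdd_of_mem, hsum, add_assoc, ZModModule.add_self, add_zero]
    rw [hsum, add_mem_twistSet_iff hc, add_mem_twistSet_iff hc]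
    exact ⟨h.1, h.2.2, h.2.1⟩
  · rw [twistedAdd_of_notMem h, twistedAdd_of_notMem, ZModModule.add_add_cancel_left]
    rw [ZModModule.add_add_cancel_left]
    exact fun h' => h ⟨h'.1, h'.2.2, h'.2.1⟩

/-- `x + y` is reached as `((u + x) + y) + u`, through lines that leave `F` and so are
untwisted. -/
lemma add_mem_of_twistedAdd_mem {A : Set V}
    (hA : ∀ x ∈ A, ∀ y ∈ A, twistedAdd F c x y ∈ A) {u : V} (hu : u ∈ A) (huF : u ∉ F)
    (hx : x ∈ A) (hy : y ∈ A) : x + y ∈ A := by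
  by_cases hxF : x ∈ F
  · by_cases hyF : y ∈ F
    · have hux : u + x ∉ F := fun h => huF ((F.add_mem_cancel_right hxF).1 h)
      have huxy : u + x + y ∉ F := fun h => hux ((F.add_mem_cancel_right hyF).1 h)
      have h1 : u + x ∈ A := twistedAdd_of_left_notMem huF ▸ hA u hu x hx
      have h2 : u + x + y ∈ A := twistedAdd_of_left_notMem hux ▸ hA _ h1 y hy
      have h3 : u + x + y + u ∈ A := twistedAdd_of_left_notMem huxy ▸ hA _ h2 u hu
      rwa [show u + x + y + u = (u + u) + (x + y) by abel, ZModModule.add_self, zero_add] at h3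
    · rw [add_comm]
      exact twistedAdd_of_left_notMem hyF ▸ hA y hy x hx
  · exact twistedAdd_of_left_notMem hxF ▸ hA x hx y hy

end TwistedAdd

section TwistedMul

variable {V : Type*} [AddCommGroup V] [Module (ZMod 2) V] [DecidableEq V]
  {F : AddSubgroup V} {c : V}

variable (F c) in
noncomputable def twistedMul (x y : {v : V // v ≠ 0}) : {v : V // v ≠ 0} :=
  if h : x = y then x
  else ⟨twistedAdd F c x y, twistedAdd_eq_zero_iff.not.2 (Subtype.val_injective.ne h)⟩

lemma val_twistedMul {x y : {v : V // v ≠ 0}} (h : x ≠ y) :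
    (twistedMul F c x y : V) = twistedAdd F c x y := by
  rw [twistedMul, dif_neg h]

theorem isSteinerQuasigroup_twistedMul (hc : c ∈ F) : IsSteinerQuasigroup (twistedMul F c) where
  idem x := dif_pos rfl
  comm x y := by
    obtain rfl | h := eq_or_ne x y
    · rfl
    · exact Subtype.ext (by rw [val_twistedMul h, val_twistedMul h.symm, twistedAdd_comm])
  left_inv x y := by
    obtain rfl | h := eq_or_ne x y
    · simp only [twistedMul, dif_pos]
    · have hne : x ≠ twistedMul F c x y := fun hx => y.2 <| by
        rw [← twistedAdd_twistedAdd hc x.1 y.1, ← val_twistedMul h, ← hx,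
          twistedAdd_eq_zero_iff]
      exact Subtype.ext <| by
        rw [val_twistedMul hne, val_twistedMul h, twistedAdd_twistedAdd hc]

lemma twistedAdd_mem_of_stsClosed (hc : c ∈ F) {W : Set {v : V // v ≠ 0}}
    (hW : StsClosed (steinerTriples (twistedMul F c)) W) {x y : V}
    (hx : x ∈ insert 0 (Subtype.val '' W)) (hy : y ∈ insert 0 (Subtype.val '' W)) :
    twistedAdd F c x y ∈ insert 0 (Subtype.val '' W) := by
  obtain rfl | ⟨x, hx, rfl⟩ := hx
  · rwa [zero_twistedAdd]
  obtain rfl | ⟨y, hy, rfl⟩ := hy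
  · rw [twistedAdd_comm, zero_twistedAdd]
    exact Or.inr ⟨x, hx, rfl⟩
  obtain rfl | hxy := eq_or_ne x y
  · exact Or.inl (twistedAdd_eq_zero_iff.2 rfl)
  · exact Or.inr ⟨_, (isSteinerQuasigroup_twistedMul hc).stsClosed_iff.1 hW x hx y hy,
      val_twistedMul hxy⟩

lemma stsClosed_ker (hc : c ∈ F) {M : Type*} [AddCommGroup M] (φ : V →+ M) (hφ : φ c = 0) :
    StsClosed (steinerTriples (twistedMul F c)) {x | φ x = 0} := by
  refine (isSteinerQuasigroup_twistedMul hc).stsClosed_iff.2 fun x hx y hy => ?_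
  obtain rfl | hxy := eq_or_ne x y
  · rwa [(isSteinerQuasigroup_twistedMul hc).idem]
  · simp_all [val_twistedMul hxy, map_twistedAdd φ hφ]

end TwistedMul

section Coordinates

variable {ι : Type*} [DecidableEq ι] {a b c k : ι}

lemma single_one_injective : Injective fun i : ι => (Pi.single i 1 : ι → ZMod 2) :=
  fun i j h => by simpa [Pi.single_apply, eq_comm] using congrFun h i

def basisPt (i : ι) : {v : ι → ZMod 2 // v ≠ 0} := ⟨Pi.single i 1, by simp⟩

lemma basisPt_injective : Injective (basisPt (ι := ι)) := fun _ _ h =>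
  single_one_injective (congrArg Subtype.val h)

abbrev coordKer (k : ι) : AddSubgroup (ι → ZMod 2) :=
  (Pi.evalAddMonoidHom (fun _ => ZMod 2) k).ker

lemma single_mem_coordKer (h : a ≠ k) : Pi.single a 1 ∈ coordKer k := by
  simp [h.symm]

lemma twistedAdd_single_single (hab : a ≠ b) (hac : a ≠ c) (hbc : b ≠ c) (hak : a ≠ k)
    (hbk : b ≠ k) :
    twistedAdd (coordKer k) (Pi.single c 1) (Pi.single a 1) (Pi.single b 1) =
      Pi.single a 1 + Pi.single b 1 + Pi.single c 1 := by
  refine twistedAdd_of_mem ⟨?_, ?_, ?_⟩ <;>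
    simp only [mem_twistSet, ne_eq, ZModModule.add_eq_zero_iff_eq, single_one_injective.eq_iff]
  · exact ⟨single_mem_coordKer hak, by simp, hac⟩
  · exact ⟨single_mem_coordKer hbk, by simp, hbc⟩
  · refine ⟨by simp [hak.symm, hbk.symm], hab, fun h => ?_⟩
    simpa [Pi.single_apply, hab.symm, hac.symm] using congrFun h a

variable [Fintype ι]

abbrev twistedTriples (k c : ι) : Set (Finset {v : ι → ZMod 2 // v ≠ 0}) :=
  steinerTriples (twistedMul (coordKer k) (Pi.single c 1))

lemma isSTS_twistedTriples (hck : c ≠ k) : IsSTS (twistedTriples k c) :=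
  (isSteinerQuasigroup_twistedMul (single_mem_coordKer hck)).isSTS

theorem isSpreading_basisPt (hab : a ≠ b) (hac : a ≠ c) (hbc : b ≠ c) (hak : a ≠ k)
    (hbk : b ≠ k) (hck : c ≠ k) : IsSpreading (twistedTriples k c) (basisPt '' {c}ᶜ) := by
  set A := insert 0 (Subtype.val '' stsCl (twistedTriples k c) (basisPt '' {c}ᶜ))
  have hbasis {i : ι} (hi : i ≠ c) : Pi.single i 1 ∈ A :=
    Or.inr ⟨basisPt i, subset_stsCl ⟨i, hi, rfl⟩, rfl⟩
  have hclosed {x y} (hx : x ∈ A) (hy : y ∈ A) : twistedAdd _ _ x y ∈ A :=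
    twistedAdd_mem_of_stsClosed (single_mem_coordKer hck) stsClosed_stsCl hx hy
  have hadd {x y} (hx : x ∈ A) (hy : y ∈ A) : x + y ∈ A :=
    add_mem_of_twistedAdd_mem (fun _ hx _ hy => hclosed hx hy) (hbasis hck.symm) (by simp) hx hy
  have hc : Pi.single c 1 ∈ A := by
    have := hadd (hadd (hbasis hac) (hbasis hbc))
      (twistedAdd_single_single hab hac hbc hak hbk ▸ hclosed (hbasis hac) (hbasis hbc))
    rwa [ZModModule.add_add_cancel_left] at this
  have hall (v : ι → ZMod 2) : v ∈ A := by
    induction v using Pi.single_induction with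
    | zero => exact Set.mem_insert _ _
    | add v w hv hw => exact hadd hv hw
    | single i m =>
      obtain rfl | rfl := (by decide : ∀ m : ZMod 2, m = 0 ∨ m = 1) m
      · exact Or.inl (Pi.single_zero i)
      · obtain rfl | hi := eq_or_ne i c
        exacts [hc, hbasis hi]
  refine Set.eq_univ_of_forall fun x => ?_
  obtain h | ⟨y, hy, hyx⟩ := hall x.1
  · exact absurd h x.2
  · exact Subtype.val_injective hyx ▸ hy

theorem isMinSpreading_basisPt (hab : a ≠ b) (hac : a ≠ c) (hbc : b ≠ c) (hak : a ≠ k)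
    (hbk : b ≠ k) (hck : c ≠ k) : IsMinSpreading (twistedTriples k c) (basisPt '' {c}ᶜ) := by
  refine ⟨isSpreading_basisPt hab hac hbc hak hbk hck, fun S' hS' hsp => ?_⟩
  obtain ⟨_, ⟨j, hj, rfl⟩, hjS'⟩ := Set.exists_of_ssubset hS'
  -- Twisting only moves the `c`-coordinate, so the hyperplane `x j = 0` stays closed.
  have hW := stsClosed_ker (single_mem_coordKer hck) (Pi.evalAddMonoidHom (fun _ => ZMod 2) j)
    (by simpa [Pi.single_apply] using hj)
  have huniv := isSpreading_iff.1 hsp _ ?_ hW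
  · have hjW : basisPt j ∈ {x | Pi.evalAddMonoidHom _ j x.1 = 0} := huniv ▸ Set.mem_univ _
    simp [basisPt] at hjW
  · rintro _ hx
    obtain ⟨i, -, rfl⟩ := hS'.1 hx
    have hij : i ≠ j := by rintro rfl; exact hjS' hx
    simp [basisPt, hij]

end Coordinates

lemma card_nonzero_vectors (ι : Type*) [Fintype ι] [DecidableEq ι] :
    Fintype.card {v : ι → ZMod 2 // v ≠ 0} = 2 ^ Fintype.card ι - 1 := by
  rw [Fintype.card_subtype_compl, Fintype.card_fun, ZMod.card, Fintype.card_subtype_eq]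

/-- For every `d ≥ 4` there is a Steiner triple system on `n = 2^(d+1) - 1` points
having a minimal spreading set of size `d = log₂ (n + 1) - 1`. -/
theorem exists_sts_minSpreading_card_eq_d (d : ℕ) (hd : 4 ≤ d) :
    ∃ T : Set (Finset (Fin (2 ^ (d + 1) - 1))),
      IsSTS T ∧
      ∃ U : Finset (Fin (2 ^ (d + 1) - 1)),
        IsMinSpreading T ↑U ∧ U.card = d := by
  let i : Fin 4 ↪ Fin (d + 1) := Fin.castLEEmb (by omega)
  let e : {v : Fin (d + 1) → ZMod 2 // v ≠ 0} ≃ Fin (2 ^ (d + 1) - 1) :=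
    Fintype.equivFinOfCardEq (by rw [card_nonzero_vectors, Fintype.card_fin])
  have hmin := (isMinSpreading_basisPt (a := i 0) (b := i 1) (c := i 2) (k := i 3)
    (by simp) (by simp) (by simp) (by simp) (by simp) (by simp)).image_equiv e
  refine ⟨_, (isSTS_twistedTriples (c := i 2) (k := i 3) (by simp)).image_equiv e,
    ((Finset.univ.erase (i 2)).map ⟨basisPt, basisPt_injective⟩).map e.toEmbedding, ?_, ?_⟩
  · rwa [Finset.coe_map, Finset.coe_map, Finset.coe_erase, Finset.coe_univ,
      ← Set.compl_eq_univ_sdiff]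
  · simp
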